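/- Let $K$ and $L$ be $n \times n$ complex matrices. Then $|\mathrm{per}(K) - \mathrm{per}(L)| \leq n \cdot n! \cdot \|K - L\|_{\max} \cdot \max(\|K\|_{\max}, \|L\|_{\max})^{n-1}$, where $\|M\|_{\max} := \max_{i,j}|M_{ij}|$. -/

import Mathlib

/-- The permanent of an `n × n` complex matrix. -/
noncomputable def permanent {n : ℕ} (M : Matrix (Fin n) (Fin n) ℂ) : ℂ :=
  ∑ π : Equiv.Perm (Fin n), ∏ i, M i (π i)

/-- The max-norm of a complex matrix: the supremum of the absolute values of its entries. -/
noncomputable def maxNorm {n : ℕ} (M : Matrix (Fin n) (Fin n) ℂ) : ℝ :=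
  ⨆ i, ⨆ j, ‖M i j‖

/-! The term of the permanent indexed by `π` is the product map `m ↦ ∏ i, m i`, a continuous
multilinear map of norm one, evaluated at the vector `i ↦ M i (π i)`, whose sup norm is at most
`‖M‖_max`. The mean value bound for multilinear maps therefore bounds the difference of each of
the `n!` terms by `n · ‖K - L‖_max · max(‖K‖_max, ‖L‖_max)^(n-1)`. -/

theorem norm_prod_sub_prod_le {𝕜 ι : Type*} [NontriviallyNormedField 𝕜] [Fintype ι]
    (m₁ m₂ : ι → 𝕜) :
    ‖∏ i, m₁ i - ∏ i, m₂ i‖ ≤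
      Fintype.card ι * max ‖m₁‖ ‖m₂‖ ^ (Fintype.card ι - 1) * ‖m₁ - m₂‖ := by
  simpa [ContinuousMultilinearMap.norm_mkPiAlgebra] using
    (ContinuousMultilinearMap.mkPiAlgebra 𝕜 ι 𝕜).norm_image_sub_le m₁ m₂

theorem maxNorm_nonneg {n : ℕ} (M : Matrix (Fin n) (Fin n) ℂ) : 0 ≤ maxNorm M :=
  Real.iSup_nonneg fun _ => Real.iSup_nonneg fun _ => norm_nonneg _

theorem norm_le_maxNorm {n : ℕ} (M : Matrix (Fin n) (Fin n) ℂ) (i j : Fin n) :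
    ‖M i j‖ ≤ maxNorm M :=
  (le_ciSup (Set.finite_range _).bddAbove j).trans
    (le_ciSup (f := fun i => ⨆ j, ‖M i j‖) (Set.finite_range _).bddAbove i)

theorem norm_apply_perm_le_maxNorm {n : ℕ} (M : Matrix (Fin n) (Fin n) ℂ)
    (π : Equiv.Perm (Fin n)) : ‖fun i => M i (π i)‖ ≤ maxNorm M :=
  (pi_norm_le_iff_of_nonneg (maxNorm_nonneg M)).2 fun i => norm_le_maxNorm M i (π i)

theorem norm_prod_apply_perm_sub_le {n : ℕ} (K L : Matrix (Fin n) (Fin n) ℂ)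
    (π : Equiv.Perm (Fin n)) :
    ‖∏ i, K i (π i) - ∏ i, L i (π i)‖ ≤
      n * maxNorm (K - L) * max (maxNorm K) (maxNorm L) ^ (n - 1) := by
  calc ‖∏ i, K i (π i) - ∏ i, L i (π i)‖
      ≤ n * max ‖fun i => K i (π i)‖ ‖fun i => L i (π i)‖ ^ (n - 1) *
          ‖(fun i => K i (π i)) - fun i => L i (π i)‖ := by
        simpa using norm_prod_sub_prod_le (fun i => K i (π i)) (fun i => L i (π i))
    _ ≤ n * max (maxNorm K) (maxNorm L) ^ (n - 1) * maxNorm (K - L) := by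
        have hK := norm_apply_perm_le_maxNorm K π
        have hL := norm_apply_perm_le_maxNorm L π
        have hKL : ‖(fun i => K i (π i)) - fun i => L i (π i)‖ ≤ maxNorm (K - L) :=
          norm_apply_perm_le_maxNorm (K - L) π
        have hA : 0 ≤ max (maxNorm K) (maxNorm L) := le_max_of_le_left (maxNorm_nonneg K)
        gcongr
    _ = n * maxNorm (K - L) * max (maxNorm K) (maxNorm L) ^ (n - 1) := by ring

/-- `|per(K) - per(L)| ≤ n · n! · ‖K-L‖_max · max(‖K‖_max, ‖L‖_max)^{n-1}`. -/
theorem stmt2 (n : ℕ) (K L : Matrix (Fin n) (Fin n) ℂ) :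
    ‖permanent K - permanent L‖ ≤
      (n : ℝ) * (n.factorial : ℝ) * maxNorm (K - L) * max (maxNorm K) (maxNorm L) ^ (n - 1) := by
  calc ‖permanent K - permanent L‖
      = ‖∑ π : Equiv.Perm (Fin n), (∏ i, K i (π i) - ∏ i, L i (π i))‖ := by
        rw [permanent, permanent, Finset.sum_sub_distrib]
    _ ≤ ∑ π : Equiv.Perm (Fin n), ‖∏ i, K i (π i) - ∏ i, L i (π i)‖ := norm_sum_le _ _
    _ ≤ n.factorial * (n * maxNorm (K - L) * max (maxNorm K) (maxNorm L) ^ (n - 1)) := by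
        simpa [Fintype.card_perm] using
          Finset.sum_le_card_nsmul Finset.univ _ _ fun π _ => norm_prod_apply_perm_sub_le K L π
    _ = n * n.factorial * maxNorm (K - L) * max (maxNorm K) (maxNorm L) ^ (n - 1) := by ring
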